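/- arXiv:2206.14351 — 2 statements merged into one kernel-verified Lean document; each statement's English description precedes it below -/
import Mathlib

section
/- Let δ ≠ id be a permutation and let l be a positive integer with l ≤ d₁(δ). Suppose π = δ t_{ab} for some a ≤ l < b with ℓ(π) = ℓ(δ) + 1. Then d₁(π) ≥ l. -/
/-- A permutation of the positive integers, modeled as a permutation of `ℕ`
fixing `0` (and, separately assumed, all but finitely many points). -/
def FinPerm (w : Equiv.Perm ℕ) : Prop :=
  w 0 = 0 ∧ {i : ℕ | w i ≠ i}.Finite

/-- The length `ℓ(w)`: the number of inversions, i.e. pairs `i < j` with `w i > w j`. -/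
noncomputable def len (w : Equiv.Perm ℕ) : ℕ :=
  {p : ℕ × ℕ | p.1 < p.2 ∧ w p.2 < w p.1}.ncard

/-- The set of descents: positions `i ≥ 1` with `w i > w (i+1)`. -/
def descents (w : Equiv.Perm ℕ) : Set ℕ :=
  {i : ℕ | 0 < i ∧ w (i + 1) < w i}

/-- `d₁(w)`: the first (smallest) descent of `w`. -/
noncomputable def d1 (w : Equiv.Perm ℕ) : ℕ := sInf (descents w)

/-- `d₂(w)`: the last (largest) descent of `w`. -/
noncomputable def d2 (w : Equiv.Perm ℕ) : ℕ := sSup (descents w)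

/-- `kCover k ρ π` means `ρ ⋖_k π`:  `π = ρ t_{a b}` for some positive
`a ≤ k < b`, with `ℓ(π) = ℓ(ρ) + 1`. -/
def kCover (k : ℕ) (ρ π : Equiv.Perm ℕ) : Prop :=
  ∃ a b : ℕ, 0 < a ∧ a ≤ k ∧ k < b ∧ π = ρ * Equiv.swap a b ∧ len π = len ρ + 1

/-- inversion set is finite for finitely supported permutations -/
lemma inv_finite (w : Equiv.Perm ℕ) (h : {i : ℕ | w i ≠ i}.Finite) :
    {p : ℕ × ℕ | p.1 < p.2 ∧ w p.2 < w p.1}.Finite := by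
  classical
  set S := h.toFinset with hS
  set N := S.sup id with hN
  have hbound : ∀ x : ℕ, w x ≠ x → x ≤ N := by
    intro x hx
    have : x ∈ S := by simp [hS, hx]
    exact Finset.le_sup (f := id) this
  have hbound' : ∀ x : ℕ, w x ≠ x → w x ≤ N := by
    intro x hx
    have : w (w x) ≠ w x := fun hc => hx (w.injective hc)
    exact hbound _ this
  apply Set.Finite.subset ((Set.finite_Iic N).prod (Set.finite_Iic N))
  rintro ⟨i, j⟩ hp
  simp only [Set.mem_setOf_eq] at hp
  obtain ⟨hij, hw⟩ := hp
  simp only [Set.mem_prod, Set.mem_Iic]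
  by_cases hj : w j = j
  · by_cases hi : w i = i
    · omega
    · constructor
      · exact hbound i hi
      · have := hbound' i hi; omega
  · have hjN := hbound j hj
    exact ⟨by omega, hjN⟩

lemma fin_mul_swap (w : Equiv.Perm ℕ) (h : {i : ℕ | w i ≠ i}.Finite) (a b : ℕ) :
    {i : ℕ | (w * Equiv.swap a b) i ≠ i}.Finite := by
  apply Set.Finite.subset (h.union ((Set.finite_singleton b).insert a))
  intro x hx
  simp only [Set.mem_setOf_eq] at hx
  simp only [Set.mem_union, Set.mem_setOf_eq, Set.mem_insert_iff, Set.mem_singleton_iff]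
  by_cases hxa : x = a
  · right; left; exact hxa
  by_cases hxb : x = b
  · right; right; exact hxb
  · left
    intro hc
    apply hx
    simp [Equiv.Perm.mul_apply, Equiv.swap_apply_of_ne_of_ne hxa hxb, hc]

/-- Key lemma: multiplying by a swap taking a smaller value to a bigger one
increases the length by at least one. -/
lemma len_succ_le (w : Equiv.Perm ℕ) (h : {i : ℕ | w i ≠ i}.Finite)
    (a b : ℕ) (hab : a < b) (hw : w a < w b) :
    len w + 1 ≤ len (w * Equiv.swap a b) := by
  classical
  set s := Equiv.swap a b with hs
  have hIw := inv_finite w h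
  have hIws := inv_finite (w * s) (fin_mul_swap w h a b)
  set I : Set (ℕ × ℕ) := {p : ℕ × ℕ | p.1 < p.2 ∧ w p.2 < w p.1} with hI
  set J : Set (ℕ × ℕ) := {p : ℕ × ℕ | p.1 < p.2 ∧ (w * s) p.2 < (w * s) p.1} with hJ
  have hab_ne : a ≠ b := hab.ne
  have hsa : s a = b := Equiv.swap_apply_left a b
  have hsb : s b = a := Equiv.swap_apply_right a b
  have hss : ∀ x, s (s x) = x := fun x => Equiv.swap_apply_self a b x
  have hsx : ∀ x, x ≠ a → x ≠ b → s x = x := fun x h1 h2 => Equiv.swap_apply_of_ne_of_ne h1 h2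
  have hmemI : ∀ i j : ℕ, (i, j) ∈ I ↔ i < j ∧ w j < w i := by
    intro i j; rw [hI]; simp only [Set.mem_setOf_eq]
  have hmemJ : ∀ i j : ℕ, (i, j) ∈ J ↔ i < j ∧ w (s j) < w (s i) := by
    intro i j; rw [hJ]; simp only [Set.mem_setOf_eq, Equiv.Perm.mul_apply]
  have hnot : (a, b) ∉ I := by
    rw [hmemI]
    rintro ⟨-, hc⟩
    omega
  have hlenw : len w = I.ncard := by rw [len, ← hI]
  have hlenws : len (w * s) = J.ncard := by rw [len, ← hJ]
  set f : ℕ × ℕ → ℕ × ℕ := fun p => if w (s p.2) < w (s p.1) then p else (s p.1, s p.2) with hf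
  have hfval1 : ∀ i j : ℕ, w (s j) < w (s i) → f (i, j) = (i, j) := by
    intro i j hc; simp only [hf]; rw [if_pos hc]
  have hfval2 : ∀ i j : ℕ, ¬ w (s j) < w (s i) → f (i, j) = (s i, s j) := by
    intro i j hc; simp only [hf]; rw [if_neg hc]
  have hmaps : ∀ p ∈ insert (a, b) I, f p ∈ J := by
    rintro ⟨i, j⟩ hp
    have hij : i < j := by
      rcases hp with hp | hp
      · simp only [Prod.ext_iff] at hp; omega
      · exact ((hmemI i j).mp hp).1
    by_cases hc : w (s j) < w (s i)
    · rw [hfval1 i j hc, hmemJ]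
      exact ⟨hij, hc⟩
    · have hne' : s i ≠ s j := fun hc' => hij.ne (s.injective hc')
      have hc' : w (s i) < w (s j) := by
        have : w (s i) ≠ w (s j) := fun hc'' => hne' (w.injective hc'')
        omega
      rcases hp with hp | hp
      · exfalso
        have hia : i = a ∧ j = b := by simpa [Prod.ext_iff] using hp
        rw [hia.1, hia.2, hsa, hsb] at hc'
        omega
      · obtain ⟨-, hinv⟩ := (hmemI i j).mp hp
        rw [hfval2 i j hc, hmemJ, hss, hss]
        refine ⟨?_, hinv⟩
        -- show s i < s j
        by_cases hia : i = a
        · exfalso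
          by_cases hjb : j = b
          · rw [hia, hjb, hsa, hsb] at hc'; omega
          · have hja : j ≠ a := by omega
            rw [hia, hsa, hsx j hja hjb] at hc'
            rw [hia] at hinv
            omega
        · by_cases hib : i = b
          · have hja : j ≠ a := by omega
            have hjb : j ≠ b := by omega
            rw [hib, hsb, hsx j hja hjb]
            omega
          · by_cases hja : j = a
            · rw [hsx i hia hib, hja, hsa]
              omega
            · by_cases hjb : j = b
              · exfalso
                rw [hsx i hia hib, hjb, hsb] at hc'
                rw [hjb] at hinv
                omega
              · exfalso
                rw [hsx i hia hib, hsx j hja hjb] at hc'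
                omega
  have hinj : Set.InjOn f (insert (a, b) I) := by
    rintro ⟨i, j⟩ hp ⟨k, m⟩ hq heq
    have hij : i < j := by
      rcases hp with hp | hp
      · simp only [Prod.ext_iff] at hp; omega
      · exact ((hmemI i j).mp hp).1
    have hkm : k < m := by
      rcases hq with hq | hq
      · simp only [Prod.ext_iff] at hq; omega
      · exact ((hmemI k m).mp hq).1
    by_cases hcp : w (s j) < w (s i) <;> by_cases hcq : w (s m) < w (s k)
    · rw [hfval1 i j hcp, hfval1 k m hcq] at heq
      exact heq
    · exfalso
      rw [hfval1 i j hcp, hfval2 k m hcq] at heq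
      obtain ⟨h1, h2⟩ := Prod.ext_iff.mp heq
      simp only at h1 h2
      rcases hp with hp | hp
      · obtain ⟨ha', hb'⟩ : i = a ∧ j = b := by simpa [Prod.ext_iff] using hp
        have hk : k = b := by
          have := congrArg s h1
          rw [hss, ha', hsa] at this
          omega
        have hm : m = a := by
          have := congrArg s h2
          rw [hss, hb', hsb] at this
          omega
        omega
      · obtain ⟨-, hinv⟩ := (hmemI i j).mp hp
        rw [h1, h2] at hinv
        exact hcq hinv
    · exfalso
      rw [hfval2 i j hcp, hfval1 k m hcq] at heq
      obtain ⟨h1, h2⟩ := Prod.ext_iff.mp heq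
      simp only at h1 h2
      rcases hq with hq | hq
      · obtain ⟨ha', hb'⟩ : k = a ∧ m = b := by simpa [Prod.ext_iff] using hq
        have hk : i = b := by
          have := congrArg s h1
          rw [hss, ha', hsa] at this
          omega
        have hm : j = a := by
          have := congrArg s h2
          rw [hss, hb', hsb] at this
          omega
        omega
      · obtain ⟨-, hinv⟩ := (hmemI k m).mp hq
        rw [← h1, ← h2] at hinv
        exact hcp hinv
    · rw [hfval2 i j hcp, hfval2 k m hcq] at heq
      obtain ⟨h1, h2⟩ := Prod.ext_iff.mp heq
      simp only at h1 h2
      exact Prod.ext (s.injective h1) (s.injective h2)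
  have hle := Set.ncard_le_ncard_of_injOn f hmaps hinj hIws
  rw [Set.ncard_insert_of_notMem hnot hIw] at hle
  omega

lemma len_one : len (1 : Equiv.Perm ℕ) = 0 := by
  have : {p : ℕ × ℕ | p.1 < p.2 ∧ (1 : Equiv.Perm ℕ) p.2 < (1 : Equiv.Perm ℕ) p.1} = ∅ := by
    ext ⟨i, j⟩
    simp only [Set.mem_setOf_eq, Set.mem_empty_iff_false, iff_false, not_and, Equiv.Perm.one_apply]
    omega
  rw [len, this, Set.ncard_empty]

lemma descents_nonempty (w : Equiv.Perm ℕ) (h0 : w 0 = 0) (hne : w ≠ 1) :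
    (descents w).Nonempty := by
  by_contra h
  rw [Set.not_nonempty_iff_eq_empty] at h
  have hmono : StrictMono w := by
    apply strictMono_nat_of_lt_succ
    intro i
    rcases Nat.eq_zero_or_pos i with hi | hi
    · subst hi
      have : w (0 + 1) ≠ 0 := by
        intro hc
        have : w (0 + 1) = w 0 := by rw [hc, h0]
        have := w.injective this
        omega
      rw [h0]
      omega
    · have hi' : i ∉ descents w := by rw [h]; exact Set.notMem_empty i
      simp only [descents, Set.mem_setOf_eq, not_and, not_lt] at hi'
      have hle := hi' hi
      have hne' : w i ≠ w (i + 1) := fun hc => by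
        have := w.injective hc; omega
      omega
  apply hne
  apply Equiv.ext
  intro x
  have h1 : x ≤ w x := hmono.le_apply
  have h2 : StrictMono ⇑w.symm := by
    intro u v huv
    rw [← hmono.lt_iff_lt]
    simpa using huv
  have h3 : w x ≤ w.symm (w x) := h2.le_apply
  rw [Equiv.symm_apply_apply] at h3
  simp only [Equiv.Perm.one_apply]
  omega

theorem stmt2 (δ : Equiv.Perm ℕ) (hδ : FinPerm δ) (hne : δ ≠ 1)
    (l : ℕ) (hl : 0 < l) (hld : l ≤ d1 δ)
    (π : Equiv.Perm ℕ) (a b : ℕ) (ha : 0 < a) (hal : a ≤ l) (hlb : l < b)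
    (hπ : π = δ * Equiv.swap a b) (hlen : len π = len δ + 1) :
    l ≤ d1 π := by
  classical
  have hab : a < b := lt_of_le_of_lt hal hlb
  have hπfin : {i : ℕ | π i ≠ i}.Finite := by
    rw [hπ]; exact fin_mul_swap δ hδ.2 a b
  -- Step 1: δ a < δ b
  have hδab : δ a < δ b := by
    by_contra hc
    have hne' : δ a ≠ δ b := fun hc' => hab.ne (δ.injective hc')
    have hba : δ b < δ a := by omega
    have hπa : π a = δ b := by rw [hπ]; simp [Equiv.Perm.mul_apply]
    have hπb : π b = δ a := by rw [hπ]; simp [Equiv.Perm.mul_apply]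
    have := len_succ_le π hπfin a b hab (by rw [hπa, hπb]; exact hba)
    have hps : π * Equiv.swap a b = δ := by
      rw [hπ, mul_assoc, Equiv.swap_mul_self, mul_one]
    rw [hps, hlen] at this
    omega
  -- non-descent positions of δ below d1
  have hnd : ∀ i, 0 < i → i < l → δ i < δ (i + 1) := by
    intro i hi hil
    have : i ∉ descents δ := Nat.notMem_of_lt_sInf (lt_of_lt_of_le hil hld)
    simp only [descents, Set.mem_setOf_eq, not_and, not_lt] at this
    have hle := this hi
    have : δ i ≠ δ (i + 1) := fun hc => by have := δ.injective hc; omega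
    omega
  -- descents of π are all ≥ l
  have hkey : ∀ i ∈ descents π, l ≤ i := by
    intro i hi
    obtain ⟨hi0, hdesc⟩ := hi
    by_contra hc
    push_neg at hc
    have hib : i ≠ b := by omega
    have hib' : i + 1 ≠ b := by omega
    by_cases hia : i = a
    · -- i = a : use the triple swap argument
      subst hia
      have hπi : π i = δ b := by rw [hπ]; simp [Equiv.Perm.mul_apply]
      have hπi1 : π (i + 1) = δ (i + 1) := by
        rw [hπ]
        simp only [Equiv.Perm.mul_apply]
        rw [Equiv.swap_apply_of_ne_of_ne (by omega) hib']
      rw [hπi, hπi1] at hdesc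
      have hδi : δ i < δ (i + 1) := hnd i hi0 hc
      -- now c := i+1, i < c < b, δ i < δ c < δ b
      set c := i + 1 with hcdef
      have hcb : c < b := by omega
      have h1 : len δ + 1 ≤ len (δ * Equiv.swap i c) := by
        apply len_succ_le δ hδ.2 i c (by omega) hδi
      set u := δ * Equiv.swap i c with hu
      have hufin : {x : ℕ | u x ≠ x}.Finite := fin_mul_swap δ hδ.2 i c
      have huc : u c = δ i := by rw [hu]; simp [Equiv.Perm.mul_apply]
      have hub : u b = δ b := by
        rw [hu]
        simp only [Equiv.Perm.mul_apply]
        rw [Equiv.swap_apply_of_ne_of_ne (by omega) (by omega)]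
      have h2 : len u + 1 ≤ len (u * Equiv.swap c b) := by
        apply len_succ_le u hufin c b hcb
        rw [huc, hub]; omega
      set v := u * Equiv.swap c b with hv
      have hvfin : {x : ℕ | v x ≠ x}.Finite := fin_mul_swap u hufin c b
      have hvi : v i = δ c := by
        rw [hv, hu]
        simp only [Equiv.Perm.mul_apply]
        rw [Equiv.swap_apply_of_ne_of_ne (by omega) hib, Equiv.swap_apply_left]
      have hvc : v c = δ b := by
        rw [hv, hu]
        simp only [Equiv.Perm.mul_apply]
        rw [Equiv.swap_apply_left, Equiv.swap_apply_of_ne_of_ne (by omega) (by omega)]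
      have h3 : len v + 1 ≤ len (v * Equiv.swap i c) := by
        apply len_succ_le v hvfin i c (by omega)
        rw [hvi, hvc]; omega
      have hswid : Equiv.swap i c * Equiv.swap c b * Equiv.swap i c = Equiv.swap i b := by
        have := Equiv.swap_mul_swap_mul_swap (x := b) (y := c) (z := i)
          (by omega : b ≠ c) (by omega : b ≠ i)
        rw [Equiv.swap_comm c i, Equiv.swap_comm b c] at this
        rw [this, Equiv.swap_comm]
      have hvπ : v * Equiv.swap i c = π := by
        rw [hv, hu, hπ, mul_assoc, mul_assoc, ← mul_assoc (Equiv.swap i c), hswid]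
      rw [hvπ, hlen] at h3
      omega
    · -- i ≠ a
      by_cases hia' : i + 1 = a
      · have hπi : π i = δ i := by
          rw [hπ]
          simp only [Equiv.Perm.mul_apply]
          rw [Equiv.swap_apply_of_ne_of_ne hia hib]
        have hπi1 : π (i + 1) = δ b := by
          rw [hπ, hia']
          simp [Equiv.Perm.mul_apply]
        rw [hπi, hπi1] at hdesc
        have hδi : δ i < δ (i + 1) := hnd i hi0 hc
        rw [hia'] at hδi
        omega
      · have hπi : π i = δ i := by
          rw [hπ]
          simp only [Equiv.Perm.mul_apply]
          rw [Equiv.swap_apply_of_ne_of_ne hia hib]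
        have hπi1 : π (i + 1) = δ (i + 1) := by
          rw [hπ]
          simp only [Equiv.Perm.mul_apply]
          rw [Equiv.swap_apply_of_ne_of_ne hia' hib']
        rw [hπi, hπi1] at hdesc
        exact absurd hdesc (by have := hnd i hi0 hc; omega)
  -- π has a descent
  have hπ0 : π 0 = 0 := by
    rw [hπ]
    simp only [Equiv.Perm.mul_apply]
    rw [Equiv.swap_apply_of_ne_of_ne (by omega) (by omega), hδ.1]
  have hπne : π ≠ 1 := by
    intro hc
    rw [hc, len_one] at hlen
    omega
  have hnon := descents_nonempty π hπ0 hπne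
  exact le_csInf hnon hkey
end

section
/- Let δ ≠ id be a permutation and let k be a positive integer with k ≥ d₂(δ). Suppose ρ = δ t_{ab} for some a ≤ k < b with ℓ(ρ) = ℓ(δ) + 1. Then d₂(ρ) ≤ k. -/
/-!
Write `s = t_{ab}` with `a < b`. Sending a pair `i < j` to `(s i, s j)`, sorted, identifies
the inversions of `δ s` with the symmetric difference of the inversions of `δ` and of `s`, and
the inversions of `s` are `(a, b)` together with `(a, c)` and `(c, b)` for `a < c < b`.
Counting them gives the classical formula
`ℓ(δ t_{ab}) = ℓ(δ) + 1 + 2 #{a < c < b | δ a < δ c < δ b}` when `δ a < δ b`.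
Hence `ℓ(δ t_{ab}) = ℓ(δ) + 1` forces `δ a < δ b` with no value `δ c`, `a < c < b`, in between.
Since `δ` is increasing beyond `k`, a descent `i > k` of `ρ` could only be `i = b`, where
`δ a < δ b < δ (b + 1)`, or `i + 1 = b`, where `δ a < δ (b - 1) < δ b`.
-/

open Equiv Set
open scoped symmDiff

def inversions (w : Perm ℕ) : Set (ℕ × ℕ) := {p | p.1 < p.2 ∧ w p.2 < w p.1}

lemma len_eq_ncard_inversions (w : Perm ℕ) : len w = (inversions w).ncard := rfl

lemma apply_eq_self_of_lt {w : Perm ℕ} {N : ℕ} (hN : N ∈ upperBounds {i | w i ≠ i}) {i : ℕ}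
    (hi : N < i) : w i = i :=
  by_contra fun hc => (hN hc).not_gt hi

lemma inversions_finite {w : Perm ℕ} (h : {i | w i ≠ i}.Finite) : (inversions w).Finite := by
  obtain ⟨N, hN⟩ := h.bddAbove
  refine ((finite_Iic N).prod (finite_Iic N)).subset ?_
  rintro ⟨i, j⟩ ⟨hij : i < j, hw : w j < w i⟩
  -- the support is `w`-stable, so `w i` is moved when `i` is
  have hj : j ≤ N := by
    by_contra! hj
    rw [apply_eq_self_of_lt hN hj] at hw
    have := w.injective (apply_eq_self_of_lt hN (by omega : N < w i))
    omega
  exact ⟨by simp only [mem_Iic]; omega, hj⟩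

def sortedImage (s : Perm ℕ) (p : ℕ × ℕ) : ℕ × ℕ :=
  if s p.1 < s p.2 then (s p.1, s p.2) else (s p.2, s p.1)

section Involution

variable {s : Perm ℕ} (hs : Function.Involutive s)
include hs

lemma sortedImage_sortedImage {p : ℕ × ℕ} (hp : p.1 < p.2) :
    sortedImage s (sortedImage s p) = p := by
  unfold sortedImage
  split_ifs <;> simp only [hs _] at * <;> first | rfl | omega

lemma injOn_sortedImage : InjOn (sortedImage s) {p | p.1 < p.2} :=
  fun p hp q hq h => by rw [← sortedImage_sortedImage hs hp, h, sortedImage_sortedImage hs hq]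

lemma mem_inversions_mul_iff (w : Perm ℕ) {p : ℕ × ℕ} (hp : p.1 < p.2) :
    p ∈ inversions (w * s) ↔ sortedImage s p ∈ inversions w ∆ inversions s := by
  have hs1 : s p.1 ≠ s p.2 := s.injective.ne hp.ne
  have hw1 : w (s p.1) ≠ w (s p.2) := w.injective.ne hs1
  unfold sortedImage
  simp only [inversions, mem_symmDiff, mem_ofPred_eq, Perm.mul_apply]
  split_ifs <;> simp only [hs _] <;> omega

lemma image_sortedImage_inversions_mul (w : Perm ℕ) :
    sortedImage s '' inversions (w * s) = inversions w ∆ inversions s := by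
  ext q
  constructor
  · rintro ⟨p, hp, rfl⟩
    exact (mem_inversions_mul_iff hs w hp.1).1 hp
  · intro hq
    have hq12 : q.1 < q.2 := by rcases hq with ⟨h, -⟩ | ⟨h, -⟩ <;> exact h.1
    have hq' : (sortedImage s q).1 < (sortedImage s q).2 := by
      have := s.injective.ne hq12.ne
      unfold sortedImage; split_ifs <;> simp only <;> omega
    refine ⟨sortedImage s q, ?_, sortedImage_sortedImage hs hq12⟩
    rwa [mem_inversions_mul_iff hs w hq', sortedImage_sortedImage hs hq12]

lemma inversions_mul_finite {w : Perm ℕ} (hw : (inversions w).Finite)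
    (hsf : (inversions s).Finite) : (inversions (w * s)).Finite :=
  Finite.of_finite_image
    (by rw [image_sortedImage_inversions_mul hs]; exact hw.sdiff.union hsf.sdiff)
    ((injOn_sortedImage hs).mono fun _ hp => hp.1)

lemma len_mul_add_ncard_inter {w : Perm ℕ} (hw : (inversions w).Finite)
    (hsf : (inversions s).Finite) :
    len (w * s) + (inversions s ∩ inversions w).ncard =
      len w + (inversions s \ inversions w).ncard := by
  have hsymm : len (w * s) = (inversions w ∆ inversions s).ncard := by
    rw [len_eq_ncard_inversions, ← image_sortedImage_inversions_mul hs,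
      ((injOn_sortedImage hs).mono fun _ hp => hp.1).ncard_image]
  rw [hsymm, Set.symmDiff_def, ncard_union_eq disjoint_sdiff_sdiff hw.sdiff hsf.sdiff,
    len_eq_ncard_inversions, ← ncard_inter_add_ncard_sdiff_eq_ncard _ (inversions s) hw,
    inter_comm]
  omega

end Involution

section Swap

variable {a b : ℕ}

lemma inversions_swap (hab : a < b) :
    inversions (swap a b) = insert (a, b) ((a, ·) '' Ioo a b ∪ (·, b) '' Ioo a b) := by
  ext ⟨i, j⟩
  simp only [inversions, swap_apply_def, mem_ofPred_eq, mem_insert_iff, mem_union, mem_image,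
    mem_Ioo, Prod.mk.injEq]
  constructor
  · rintro ⟨hij, h⟩
    split_ifs at h <;>
      first
      | omega
      | exact Or.inr (Or.inl ⟨j, by omega⟩)
      | exact Or.inr (Or.inr ⟨i, by omega⟩)
  · rintro (h | ⟨c, hc, rfl, rfl⟩ | ⟨c, hc, rfl, rfl⟩) <;> split_ifs <;> omega

lemma ncard_swapPairs_inter (S : Set (ℕ × ℕ)) :
    (((a, ·) '' Ioo a b ∪ (·, b) '' Ioo a b) ∩ S).ncard =
      {c ∈ Ioo a b | (a, c) ∈ S}.ncard + {c ∈ Ioo a b | (c, b) ∈ S}.ncard := by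
  have hdisj : Disjoint ((a, ·) '' Ioo a b ∩ S) ((·, b) '' Ioo a b ∩ S) := by
    rw [Set.disjoint_left]
    rintro _ ⟨⟨c, hc, rfl⟩, -⟩ ⟨⟨d, hd, hdc⟩, -⟩
    simp only [Prod.mk.injEq] at hdc
    exact (mem_Ioo.1 hd).1.ne' hdc.1
  rw [union_inter_distrib_right, ncard_union_eq hdisj (((finite_Ioo a b).image _).inter_of_left _)
    (((finite_Ioo a b).image _).inter_of_left _), ← image_inter_preimage, ← image_inter_preimage,
    ncard_image_of_injective _ (Prod.mk_right_injective a),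
    ncard_image_of_injective _ (Prod.mk_left_injective b)]
  rfl

lemma inversions_swap_finite (hab : a < b) : (inversions (swap a b)).Finite := by
  rw [inversions_swap hab]
  exact (((finite_Ioo a b).image _).union ((finite_Ioo a b).image _)).insert _

end Swap

lemma ncard_sep_eq_add_of_iff_or {α : Type*} {I : Set α} (hI : I.Finite) {P Q R : α → Prop}
    (hPQR : ∀ c ∈ I, P c ↔ Q c ∨ R c) (hQR : ∀ c ∈ I, Q c → ¬ R c) :
    {c ∈ I | P c}.ncard = {c ∈ I | Q c}.ncard + {c ∈ I | R c}.ncard := by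
  rw [← ncard_union_eq _ (hI.sep _) (hI.sep _)]
  · congr 1
    ext c
    simp only [mem_union, mem_sep_iff]
    grind
  · exact disjoint_left.2 fun c hc hc' => hQR c hc.1 hc.2 hc'.2

theorem len_mul_swap {w : Perm ℕ} (hw : (inversions w).Finite) {a b : ℕ} (hab : a < b)
    (hlt : w a < w b) :
    len (w * swap a b) = len w + 1 + 2 * {c ∈ Ioo a b | w a < w c ∧ w c < w b}.ncard := by
  set G := (a, ·) '' Ioo a b ∪ (·, b) '' Ioo a b
  have hab_w : (a, b) ∉ inversions w := fun h => h.2.not_gt hlt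
  have hab_G : (a, b) ∉ G := by
    rintro (⟨c, hc, hcb⟩ | ⟨c, hc, hca⟩) <;> simp only [Prod.mk.injEq] at * <;> grind
  have key := len_mul_add_ncard_inter (swap_apply_self a b) hw (inversions_swap_finite hab)
  rw [inversions_swap hab, insert_inter_of_notMem hab_w, insert_sdiff_of_notMem _ hab_w,
    ncard_insert_of_notMem (fun h => hab_G h.1)
      ((((finite_Ioo a b).image _).union ((finite_Ioo a b).image _)).sdiff),
    sdiff_eq, ncard_swapPairs_inter, ncard_swapPairs_inter] at key
  -- for `a < c < b`, exactly one of `(a, c)`, `(c, b)` is an inversion unless `w c` lies between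
  have hw_ne : ∀ c ∈ Ioo a b, w c ≠ w a ∧ w c ≠ w b := fun c hc =>
    ⟨w.injective.ne (mem_Ioo.1 hc).1.ne', w.injective.ne (mem_Ioo.1 hc).2.ne⟩
  have hac := ncard_sep_eq_add_of_iff_or (finite_Ioo a b)
    (P := fun c => (a, c) ∈ (inversions w)ᶜ) (Q := fun c => (c, b) ∈ inversions w)
    (R := fun c => w a < w c ∧ w c < w b)
    (fun c hc => by
      have := hw_ne c hc
      simp only [inversions, mem_compl_iff, mem_ofPred_eq, mem_Ioo] at this hc ⊢
      omega)
    (fun c hc => by simp only [inversions, mem_ofPred_eq]; omega)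
  have hcb := ncard_sep_eq_add_of_iff_or (finite_Ioo a b)
    (P := fun c => (c, b) ∈ (inversions w)ᶜ) (Q := fun c => (a, c) ∈ inversions w)
    (R := fun c => w a < w c ∧ w c < w b)
    (fun c hc => by
      have := hw_ne c hc
      simp only [inversions, mem_compl_iff, mem_ofPred_eq, mem_Ioo] at this hc ⊢
      omega)
    (fun c hc => by simp only [inversions, mem_ofPred_eq]; omega)
  omega

lemma lt_and_not_between_of_len_mul_swap {w : Perm ℕ} (hw : (inversions w).Finite) {a b : ℕ}
    (hab : a < b) (hlen : len (w * swap a b) = len w + 1) :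
    w a < w b ∧ ∀ c, a < c → c < b → ¬ (w a < w c ∧ w c < w b) := by
  rcases (w.injective.ne hab.ne).lt_or_gt with hlt | hgt
  · refine ⟨hlt, fun c hac hcb hc => ?_⟩
    have hgap : {c ∈ Ioo a b | w a < w c ∧ w c < w b}.ncard = 0 := by
      rw [len_mul_swap hw hab hlt] at hlen
      omega
    rw [ncard_eq_zero ((finite_Ioo a b).sep _)] at hgap
    exact eq_empty_iff_forall_notMem.1 hgap c ⟨⟨hac, hcb⟩, hc⟩
  · -- `len_mul_swap` for `w * swap a b` gives `len w > len (w * swap a b)`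
    have hw' := inversions_mul_finite (swap_apply_self a b) hw (inversions_swap_finite hab)
    have := len_mul_swap hw' hab (by simpa using hgt)
    rw [mul_swap_mul_self] at this
    omega

lemma descents_bddAbove {w : Perm ℕ} (h : {i | w i ≠ i}.Finite) : BddAbove (descents w) := by
  obtain ⟨N, hN⟩ := h.bddAbove
  refine ⟨N, fun i ⟨_, hi⟩ => ?_⟩
  by_contra! hNi
  rw [apply_eq_self_of_lt hN hNi, apply_eq_self_of_lt hN (by omega : N < i + 1)] at hi
  omega

lemma apply_lt_apply_succ_of_d2_lt {w : Perm ℕ} (h : BddAbove (descents w)) {i : ℕ}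
    (hi0 : 0 < i) (hi : d2 w < i) : w i < w (i + 1) := by
  have hnd : ¬ w (i + 1) < w i := fun hd => (le_csSup h ⟨hi0, hd⟩).not_gt hi
  have := w.injective.ne (show i + 1 ≠ i by omega)
  omega

theorem stmt6_general (δ : Equiv.Perm ℕ) (hδ : FinPerm δ)
    (k : ℕ) (hkd : d2 δ ≤ k)
    (ρ : Equiv.Perm ℕ) (a b : ℕ) (hak : a ≤ k) (hkb : k < b)
    (hρ : ρ = δ * Equiv.swap a b) (hlen : len ρ = len δ + 1) :
    d2 ρ ≤ k := by
  subst hρ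
  have hab : a < b := hak.trans_lt hkb
  obtain ⟨hlt, hgap⟩ := lt_and_not_between_of_len_mul_swap (inversions_finite hδ.2) hab hlen
  have hinc : ∀ i, k < i → δ i < δ (i + 1) := fun i hi =>
    apply_lt_apply_succ_of_d2_lt (descents_bddAbove hδ.2) (by omega) (by omega)
  refine csSup_le' fun i ⟨_, hdesc⟩ => ?_
  by_contra! hik
  have hia : i ≠ a := by omega
  have hia' : i + 1 ≠ a := by omega
  have hmono := hinc i hik
  rw [Perm.mul_apply, Perm.mul_apply] at hdesc
  rcases eq_or_ne i b with rfl | hib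
  · rw [swap_apply_right, swap_apply_of_ne_of_ne hia' (by omega)] at hdesc
    omega
  rcases eq_or_ne (i + 1) b with rfl | hib'
  · rw [swap_apply_of_ne_of_ne hia hib, swap_apply_right] at hdesc
    exact hgap i (by omega) (by omega) ⟨hdesc, hmono⟩
  · rw [swap_apply_of_ne_of_ne hia hib, swap_apply_of_ne_of_ne hia' hib'] at hdesc
    omega

theorem stmt6 (δ : Equiv.Perm ℕ) (hδ : FinPerm δ) (hne : δ ≠ 1)
    (k : ℕ) (hk : 0 < k) (hkd : d2 δ ≤ k)
    (ρ : Equiv.Perm ℕ) (a b : ℕ) (ha : 0 < a) (hak : a ≤ k) (hkb : k < b)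
    (hρ : ρ = δ * Equiv.swap a b) (hlen : len ρ = len δ + 1) :
    d2 ρ ≤ k :=
  stmt6_general δ hδ k hkd ρ a b hak hkb hρ hlen
end
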